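/- arXiv:1705.01623 — 9 statements merged into one kernel-verified Lean document; each statement's English description precedes it below -/
import Mathlib

section
/- Every term of the Somos-4 sequence is a positive integer. That is, if (a_n)_{n≥1} is the sequence of rational numbers defined by a_1 = a_2 = a_3 = a_4 = 1 and a_{n+4} = (a_{n+3}·a_{n+1} + a_{n+2}^2)/a_n for all n ≥ 1, then for every n ≥ 1 the number a_n is a positive integer (in particular a_n ≠ 0, so the recurrence is well defined). -/
/-!
Let `s` be the integer sequence obtained from the Somos-4 recurrence with integer division.
Inductively, the division is exact and any two terms of `s` at distance at most three are
coprime. Exactness at the next step comes from a polynomial identity exhibiting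
`s₁³ s₂² s₃ (s₇ s₅ + s₆²)` as a multiple of `s₄`, where `s₄` is coprime to `s₁, s₂, s₃`.
Exactness makes every term positive, and the rational Somos-4 sequence is then the cast of `s`.
-/

section CommRing

variable {R : Type*} [CommRing R] {x₀ x₁ x₂ x₃ x₄ x₅ x₆ x₇ : R}

theorem somos4_dvd_of_isCoprime
    (h₀ : x₄ * x₀ = x₃ * x₁ + x₂ ^ 2) (h₁ : x₅ * x₁ = x₄ * x₂ + x₃ ^ 2)
    (h₂ : x₆ * x₂ = x₅ * x₃ + x₄ ^ 2) (h₃ : x₇ * x₃ = x₆ * x₄ + x₅ ^ 2)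
    (c₁ : IsCoprime x₄ x₁) (c₂ : IsCoprime x₄ x₂) (c₃ : IsCoprime x₄ x₃) :
    x₄ ∣ x₇ * x₅ + x₆ ^ 2 := by
  have hdvd : x₄ ∣ (x₁ ^ 3 * (x₂ ^ 2 * x₃)) * (x₇ * x₅ + x₆ ^ 2) := by
    refine ⟨x₁ ^ 3 * x₂ ^ 2 * x₅ * x₆ + x₄ * x₁ ^ 3 * x₃ * (2 * x₅ * x₃ + x₄ ^ 2)
      + x₂ ^ 3 * (x₄ ^ 2 * x₂ ^ 2 + 3 * x₄ * x₂ * x₃ ^ 2 + 3 * x₃ ^ 4)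
      + x₁ * x₂ * x₃ ^ 3 * (x₄ * x₂ + 2 * x₃ ^ 2) + x₃ ^ 6 * x₀, ?_⟩
    linear_combination (-(x₃ ^ 6)) * h₀
      + (x₂ ^ 2 * ((x₅ * x₁) ^ 2 + (x₅ * x₁) * (x₄ * x₂ + x₃ ^ 2) + (x₄ * x₂ + x₃ ^ 2) ^ 2)
          + x₁ * x₃ ^ 3 * (x₅ * x₁ + x₄ * x₂ + x₃ ^ 2)) * h₁
      + (x₁ ^ 3 * x₃ * (x₆ * x₂ + x₅ * x₃ + x₄ ^ 2)) * h₂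
      + (x₁ ^ 3 * x₂ ^ 2 * x₅) * h₃
  exact (c₁.pow_right.mul_right (c₂.pow_right.mul_right c₃)).dvd_of_dvd_mul_left hdvd

theorem IsCoprime.of_mul_eq_mul_add {c v w x y : R} (hv : IsCoprime c v)
    (h : x * y = c * w + v) : IsCoprime c x := by
  have hxy : IsCoprime c (x * y) := by
    rw [h, add_comm, mul_comm c]
    exact hv.add_mul_right_right w
  exact hxy.of_mul_right_left

theorem somos4_isCoprime_of_isCoprime
    (h₁ : x₅ * x₁ = x₄ * x₂ + x₃ ^ 2) (h₂ : x₆ * x₂ = x₅ * x₃ + x₄ ^ 2)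
    (h₃ : x₇ * x₃ = x₆ * x₄ + x₅ ^ 2) (c₃ : IsCoprime x₄ x₃) :
    IsCoprime x₄ x₅ ∧ IsCoprime x₄ x₆ ∧ IsCoprime x₄ x₇ := by
  have c₅ : IsCoprime x₄ x₅ := c₃.pow_right.of_mul_eq_mul_add h₁
  refine ⟨c₅, (c₅.mul_right c₃).of_mul_eq_mul_add (y := x₂) (w := x₄) ?_,
    (c₅.pow_right (n := 2)).of_mul_eq_mul_add (y := x₃) (w := x₆) ?_⟩
  · linear_combination h₂
  · linear_combination h₃

end CommRing

def somos4 : ℕ → ℤ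
  | 0 | 1 | 2 | 3 => 1
  | n + 4 => (somos4 (n + 3) * somos4 (n + 1) + somos4 (n + 2) ^ 2) / somos4 n

theorem somos4_of_lt_four {n : ℕ} (hn : n < 4) : somos4 n = 1 := by
  interval_cases n <;> rfl

theorem somos4_add_four_mul_of_dvd {n : ℕ}
    (h : somos4 n ∣ somos4 (n + 3) * somos4 (n + 1) + somos4 (n + 2) ^ 2) :
    somos4 (n + 4) * somos4 n = somos4 (n + 3) * somos4 (n + 1) + somos4 (n + 2) ^ 2 := by
  rw [somos4]
  exact Int.ediv_mul_cancel h

theorem somos4_add_four_mul_and_isCoprime (n : ℕ) :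
    somos4 (n + 4) * somos4 n = somos4 (n + 3) * somos4 (n + 1) + somos4 (n + 2) ^ 2 ∧
      ∀ k, 0 < k → k ≤ 3 → IsCoprime (somos4 n) (somos4 (n + k)) := by
  induction n using Nat.strong_induction_on with
  | _ n ih =>
  rcases Nat.lt_or_ge n 4 with hn | hn
  · refine ⟨?_, fun k _ _ => by simp only [somos4_of_lt_four hn, isCoprime_one_left]⟩
    interval_cases n <;> decide
  obtain ⟨m, rfl⟩ := Nat.exists_eq_add_of_le' hn
  obtain ⟨h₀, -⟩ := ih m (by omega)
  obtain ⟨h₁, c₁⟩ := ih (m + 1) (by omega)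
  obtain ⟨h₂, c₂⟩ := ih (m + 2) (by omega)
  obtain ⟨h₃, c₃⟩ := ih (m + 3) (by omega)
  have hrel := somos4_add_four_mul_of_dvd <| somos4_dvd_of_isCoprime h₀ h₁ h₂ h₃
    (c₁ 3 (by omega) le_rfl).symm (c₂ 2 (by omega) (by omega)).symm (c₃ 1 (by omega) (by omega)).symm
  obtain ⟨c₅, c₆, c₇⟩ := somos4_isCoprime_of_isCoprime h₁ h₂ h₃ (c₃ 1 (by omega) (by omega)).symm
  refine ⟨hrel, fun k hk hk₃ => ?_⟩
  interval_cases k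
  exacts [c₅, c₆, c₇]

theorem somos4_pos (n : ℕ) : 0 < somos4 n := by
  induction n using Nat.strong_induction_on with
  | _ n ih =>
  rcases Nat.lt_or_ge n 4 with hn | hn
  · simp only [somos4_of_lt_four hn, zero_lt_one]
  obtain ⟨m, rfl⟩ := Nat.exists_eq_add_of_le' hn
  have hmul : 0 < somos4 (m + 4) * somos4 m := by
    rw [(somos4_add_four_mul_and_isCoprime m).1]
    have := ih (m + 3) (by omega)
    have := ih (m + 1) (by omega)
    positivity
  exact pos_of_mul_pos_left hmul (ih m (by omega)).le

theorem eq_somos4 {a : ℕ → ℚ} (h₀ : a 0 = 1) (h₁ : a 1 = 1) (h₂ : a 2 = 1) (h₃ : a 3 = 1)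
    (hrec : ∀ n, a (n + 4) = (a (n + 3) * a (n + 1) + a (n + 2) ^ 2) / a n) (n : ℕ) :
    a n = somos4 n := by
  induction n using Nat.strong_induction_on with
  | _ n ih =>
  rcases Nat.lt_or_ge n 4 with hn | hn
  · rw [somos4_of_lt_four hn]
    interval_cases n <;> assumption_mod_cast
  obtain ⟨m, rfl⟩ := Nat.exists_eq_add_of_le' hn
  have hm : (somos4 m : ℚ) ≠ 0 := by exact_mod_cast (somos4_pos m).ne'
  rw [hrec, ih m (by omega), ih (m + 1) (by omega), ih (m + 2) (by omega),
    ih (m + 3) (by omega), div_eq_iff hm]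
  exact_mod_cast (somos4_add_four_mul_and_isCoprime m).1.symm

/-- Every term of the Somos-4 sequence is a positive integer. -/
theorem somos4_positive_integer (a : ℕ → ℚ)
    (h1 : a 1 = 1) (h2 : a 2 = 1) (h3 : a 3 = 1) (h4 : a 4 = 1)
    (hrec : ∀ n, 1 ≤ n →
      a (n + 4) = (a (n + 3) * a (n + 1) + a (n + 2) ^ 2) / a n) :
    ∀ n, 1 ≤ n → ∃ k : ℤ, 0 < k ∧ a n = (k : ℚ) := by
  intro n hn
  obtain ⟨m, rfl⟩ := Nat.exists_eq_add_of_le' hn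
  exact ⟨somos4 m, somos4_pos m,
    eq_somos4 (a := fun n => a (n + 1)) h1 h2 h3 h4 (fun n => hrec (n + 1) n.succ_pos) m⟩
end

section
/- The linearization of the Somos-4 recurrence produces integer sequences for arbitrary integer initial conditions: let (a_n)_{n≥1} be the Somos-4 sequence, let b_1, b_2, b_3, b_4 be arbitrary integers, and define rational numbers b_n for n ≥ 5 by b_{n+4} = (a_{n+1}·b_{n+3} + 2·a_{n+2}·b_{n+2} + a_{n+3}·b_{n+1} − a_{n+4}·b_n)/a_n. Then b_n is an integer for every n ≥ 1. -/
/-!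
Put `A n = a n + b n ε` in the dual numbers `ℚ[ε]`: the two recurrences say exactly that `A` is a
Somos-4 sequence there, whose initial terms `1 + b i ε` are units of `ℤ[ε]`. Integrality of Somos-4
sequences holds inside any commutative ring extension `R → K` (here `ℤ[ε] → ℚ[ε]`), by induction
with the invariant that terms at distance at most `3` are coprime in `R`. Four consecutive relations
give `(A (n+3) A (n+1) + A (n+2)²) · A (n-3)² A (n-2)² A (n-1) ∈ A n · R`, so by coprimality `A n`
divides the numerator of `A (n+4)`; and `A (n+4) A n = A (n+3) A (n+1) + A (n+2)²` makes the new
term coprime to its three predecessors again.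
-/

open TrivSqZeroExt DualNumber

namespace DualNumber

variable {R S : Type*} [CommSemiring R] [CommSemiring S]

def mapRingHom (φ : R →+* S) : R[ε] →+* S[ε] where
  toFun x := inl (φ x.fst) + inr (φ x.snd)
  map_one' := by ext <;> simp
  map_mul' x y := by ext <;> simp
  map_zero' := by ext <;> simp
  map_add' x y := by ext <;> simp

@[simp]
theorem fst_mapRingHom (φ : R →+* S) (x : R[ε]) : (mapRingHom φ x).fst = φ x.fst := by
  simp [mapRingHom]

@[simp]
theorem snd_mapRingHom (φ : R →+* S) (x : R[ε]) : (mapRingHom φ x).snd = φ x.snd := by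
  simp [mapRingHom]

theorem mapRingHom_injective {φ : R →+* S} (hφ : Function.Injective φ) :
    Function.Injective (mapRingHom φ) := fun x y h =>
  TrivSqZeroExt.ext (hφ <| by simpa using congrArg fst h) (hφ <| by simpa using congrArg snd h)

def seq (a b : ℕ → R) (n : ℕ) : R[ε] := inl (a n) + inr (b n)

@[simp]
theorem fst_seq (a b : ℕ → R) (n : ℕ) : (seq a b n).fst = a n := by
  simp [seq]

@[simp]
theorem snd_seq (a b : ℕ → R) (n : ℕ) : (seq a b n).snd = b n := by
  simp [seq]

end DualNumber

namespace Somos4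

section CommRing

variable {R : Type*} [CommRing R]

theorem dvd_of_isCoprime {p q r s t u v w : R}
    (e1 : t * p = s * q + r ^ 2) (e2 : u * q = t * r + s ^ 2)
    (e3 : v * r = u * s + t ^ 2) (e4 : w * s = v * t + u ^ 2)
    (hq : IsCoprime t q) (hr : IsCoprime t r) (hs : IsCoprime t s) :
    t ∣ w * u + v ^ 2 := by
  have hmul : (w * u + v ^ 2) * (q ^ 2 * r ^ 2 * s) =
      t * (q * r ^ 2 * (t * r * v + r * u ^ 2 + s ^ 2 * v)
        + q ^ 2 * s * t * (2 * u * s + t ^ 2) + p * q * s ^ 2 * u ^ 2) := by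
    linear_combination (q * r ^ 2 * q * u) * e4 + (q * r ^ 2 * (t * v + u ^ 2)) * e2
      + (q ^ 2 * s * (v * r + u * s + t ^ 2)) * e3 - (q * s ^ 2 * u ^ 2) * e1
  exact ((hq.pow_right.mul_right hr.pow_right).mul_right hs).dvd_of_dvd_mul_right ⟨_, hmul⟩

theorem isCoprime_next {p q r s t : R} (h : t * p = s * q + r ^ 2)
    (hqr : IsCoprime q r) (hrs : IsCoprime r s) :
    IsCoprime q t ∧ IsCoprime r t ∧ IsCoprime s t := by
  refine ⟨?_, ?_, ?_⟩
  · have := (hqr.pow_right (n := 2)).add_mul_left_right s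
    rw [show r ^ 2 + q * s = t * p by linear_combination -h] at this
    exact this.of_mul_right_left
  · have := (hrs.mul_right hqr.symm).add_mul_left_right r
    rw [show s * q + r * r = t * p by linear_combination -h] at this
    exact this.of_mul_right_left
  · have := (hrs.symm.pow_right (n := 2)).add_mul_left_right q
    rw [show r ^ 2 + s * q = t * p by linear_combination -h] at this
    exact this.of_mul_right_left

theorem dvd_next {x : ℕ → R} {n : ℕ} (hn : 1 ≤ n)
    (hrel : ∀ k, 1 ≤ k → k < n → x (k + 4) * x k = x (k + 3) * x (k + 1) + x (k + 2) ^ 2)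
    (hunit : ∀ k, 1 ≤ k → k ≤ 4 → IsUnit (x k))
    (hcop : ∀ i, 1 ≤ i → i < n → n ≤ i + 3 → IsCoprime (x i) (x n)) :
    x n ∣ x (n + 3) * x (n + 1) + x (n + 2) ^ 2 := by
  rcases le_or_gt n 4 with hn4 | hn4
  · exact (hunit n hn hn4).dvd
  · obtain ⟨k, rfl⟩ : ∃ k, n = k + 5 := ⟨n - 5, by omega⟩
    exact dvd_of_isCoprime (hrel (k + 1) (by omega) (by omega)) (hrel (k + 2) (by omega) (by omega))
      (hrel (k + 3) (by omega) (by omega)) (hrel (k + 4) (by omega) (by omega))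
      (hcop (k + 2) (by omega) (by omega) (by omega)).symm
      (hcop (k + 3) (by omega) (by omega) (by omega)).symm
      (hcop (k + 4) (by omega) (by omega) (by omega)).symm

end CommRing

theorem pos {K : Type*} [Semifield K] [LinearOrder K] [IsStrictOrderedRing K] {a : ℕ → K}
    (hinit : ∀ n, 1 ≤ n → n ≤ 4 → 0 < a n)
    (hrec : ∀ n, 1 ≤ n → a (n + 4) = (a (n + 3) * a (n + 1) + a (n + 2) ^ 2) / a n) {n : ℕ}
    (hn : 1 ≤ n) : 0 < a n := by
  induction n using Nat.strong_induction_on with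
  | _ n ih =>
  rcases le_or_gt n 4 with hn4 | hn4
  · exact hinit n hn hn4
  · obtain ⟨k, rfl⟩ : ∃ k, n = k + 4 := ⟨n - 4, by omega⟩
    rw [hrec k (by omega)]
    have h := fun i (hi : i ≤ 3) => ih (k + i) (by omega) (by omega)
    exact div_pos (add_pos (mul_pos (h 3 le_rfl) (h 1 (by omega))) (pow_pos (h 2 (by omega)) 2))
      (h 0 (by omega))

theorem rel_of_linearized {K : Type*} [Field K] {a b : ℕ → K} {n : ℕ} (ha : a n ≠ 0)
    (hrec : a (n + 4) = (a (n + 3) * a (n + 1) + a (n + 2) ^ 2) / a n)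
    (hbrec : b (n + 4) = (a (n + 1) * b (n + 3) + 2 * a (n + 2) * b (n + 2)
      + a (n + 3) * b (n + 1) - a (n + 4) * b n) / a n) :
    seq a b (n + 4) * seq a b n = seq a b (n + 3) * seq a b (n + 1) + seq a b (n + 2) ^ 2 := by
  ext
  · simp only [fst_mul, fst_add, fst_pow, fst_seq]
    rw [hrec]
    field_simp
  · simp only [DualNumber.snd_mul, snd_add, pow_two, fst_seq, snd_seq]
    rw [hbrec, hrec]
    field_simp
    ring

section Lift

variable {R K : Type*} [CommRing R] [CommRing K] {f : R →+* K} {A : ℕ → K}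

theorem rel_of_map_eq (hf : Function.Injective f)
    (hA : ∀ n, 1 ≤ n → A (n + 4) * A n = A (n + 3) * A (n + 1) + A (n + 2) ^ 2)
    {x : ℕ → R} {k : ℕ} (hk : 1 ≤ k) (hx : ∀ i, k ≤ i → i ≤ k + 4 → f (x i) = A i) :
    x (k + 4) * x k = x (k + 3) * x (k + 1) + x (k + 2) ^ 2 := by
  apply hf
  rw [map_add, map_mul, map_mul, map_pow, hx k le_rfl (by omega),
    hx (k + 1) (by omega) (by omega), hx (k + 2) (by omega) (by omega),
    hx (k + 3) (by omega) (by omega), hx (k + 4) (by omega) le_rfl]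
  exact hA k hk

theorem exists_map_eq_next (hf : Function.Injective f)
    (hA : ∀ n, 1 ≤ n → A (n + 4) * A n = A (n + 3) * A (n + 1) + A (n + 2) ^ 2)
    (hreg : ∀ n, 1 ≤ n → IsLeftRegular (A n)) {x : ℕ → R} {n : ℕ} (hn : 1 ≤ n)
    (hx : ∀ m, 1 ≤ m → m < n + 4 → f (x m) = A m)
    (hunit : ∀ k, 1 ≤ k → k ≤ 4 → IsUnit (x k))
    (hcop : ∀ i j, 1 ≤ i → i < j → j ≤ i + 3 → j < n + 4 → IsCoprime (x i) (x j)) :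
    ∃ y, f y = A (n + 4) ∧ IsCoprime (x (n + 1)) y ∧ IsCoprime (x (n + 2)) y ∧
      IsCoprime (x (n + 3)) y := by
  obtain ⟨y, hy⟩ := dvd_next hn
    (fun k hk _ => rel_of_map_eq hf hA hk fun i _ _ => hx i (by omega) (by omega)) hunit
    (fun i h₁ h₂ h₃ => hcop i n h₁ h₂ h₃ (by omega))
  have hAy : A n * A (n + 4) = A n * f y := by
    rw [mul_comm, hA n hn, ← hx n hn (by omega), ← hx (n + 1) (by omega) (by omega),
      ← hx (n + 2) (by omega) (by omega), ← hx (n + 3) (by omega) (by omega)]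
    simp only [← map_pow, ← map_mul, ← map_add, hy]
  refine ⟨y, (hreg n hn hAy).symm, isCoprime_next (p := x n) (by rw [mul_comm, ← hy])
    (hcop (n + 1) (n + 2) (by omega) (by omega) (by omega) (by omega))
    (hcop (n + 2) (n + 3) (by omega) (by omega) (by omega) (by omega))⟩

theorem mem_range (hf : Function.Injective f)
    (hA : ∀ n, 1 ≤ n → A (n + 4) * A n = A (n + 3) * A (n + 1) + A (n + 2) ^ 2)
    (hreg : ∀ n, 1 ≤ n → IsLeftRegular (A n))
    (hinit : ∀ n, 1 ≤ n → n ≤ 4 → ∃ u, IsUnit u ∧ f u = A n) {n : ℕ} (hn : 1 ≤ n) :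
    A n ∈ f.range := by
  classical
  set x : ℕ → R := fun n => Function.invFun f (A n)
  have hx : ∀ n, A n ∈ f.range → f (x n) = A n := fun n => Function.invFun_eq
  have hunit : ∀ n, 1 ≤ n → n ≤ 4 → IsUnit (x n) := by
    intro n h₁ h₄
    obtain ⟨u, hu, hfu⟩ := hinit n h₁ h₄
    rwa [hf ((hx n ⟨u, hfu⟩).trans hfu.symm)]
  suffices ∀ N, 1 ≤ N → A N ∈ f.range ∧
      ∀ i, 1 ≤ i → i < N → N ≤ i + 3 → IsCoprime (x i) (x N) from (this n hn).1
  intro N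
  induction N using Nat.strong_induction_on with
  | _ N ih =>
  intro hN
  rcases le_or_gt N 4 with hN4 | hN4
  · obtain ⟨u, -, hfu⟩ := hinit N hN hN4
    exact ⟨⟨u, hfu⟩, fun i _ _ _ =>
      isCoprime_one_right.of_isCoprime_of_dvd_right (hunit N hN hN4).dvd⟩
  obtain ⟨n, rfl⟩ : ∃ n, N = n + 4 := ⟨N - 4, by omega⟩
  obtain ⟨y, hfy, c₁, c₂, c₃⟩ := exists_map_eq_next hf hA hreg (by omega)
    (fun m h₁ h₂ => hx m (ih m h₂ h₁).1) hunit
    (fun i j h₁ h₂ h₃ h₄ => (ih j h₄ (by omega)).2 i h₁ h₂ h₃)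
  have hxy : x (n + 4) = y := hf ((hx _ ⟨y, hfy⟩).trans hfy.symm)
  refine ⟨⟨y, hfy⟩, fun i h₁ h₂ h₃ => ?_⟩
  obtain rfl | rfl | rfl : i = n + 1 ∨ i = n + 2 ∨ i = n + 3 := by omega
  all_goals rwa [hxy]

end Lift

end Somos4

/-- The linearization of the Somos-4 recurrence produces integer sequences
for arbitrary integer initial conditions. -/
theorem somos4_linearization_integer (a : ℕ → ℚ)
    (h1 : a 1 = 1) (h2 : a 2 = 1) (h3 : a 3 = 1) (h4 : a 4 = 1)
    (hrec : ∀ n, 1 ≤ n →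
      a (n + 4) = (a (n + 3) * a (n + 1) + a (n + 2) ^ 2) / a n)
    (b : ℕ → ℚ) (b1 b2 b3 b4 : ℤ)
    (hb1 : b 1 = (b1 : ℚ)) (hb2 : b 2 = (b2 : ℚ)) (hb3 : b 3 = (b3 : ℚ)) (hb4 : b 4 = (b4 : ℚ))
    (hbrec : ∀ n, 1 ≤ n →
      b (n + 4) = (a (n + 1) * b (n + 3) + 2 * a (n + 2) * b (n + 2)
        + a (n + 3) * b (n + 1) - a (n + 4) * b n) / a n) :
    ∀ n, 1 ≤ n → ∃ k : ℤ, b n = (k : ℚ) := by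
  have hinit : ∀ n, 1 ≤ n → n ≤ 4 → a n = 1 ∧ ∃ k : ℤ, b n = k := by
    intro n hn₁ hn₄
    interval_cases n
    exacts [⟨h1, b1, hb1⟩, ⟨h2, b2, hb2⟩, ⟨h3, b3, hb3⟩, ⟨h4, b4, hb4⟩]
  have hpos : ∀ n, 1 ≤ n → 0 < a n := fun n =>
    Somos4.pos (fun n h₁ h₄ => (hinit n h₁ h₄).1 ▸ one_pos) hrec
  have hlift : ∀ n, 1 ≤ n → n ≤ 4 →
      ∃ u, IsUnit u ∧ mapRingHom (Int.castRingHom ℚ) u = seq a b n := by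
    intro n hn₁ hn₄
    obtain ⟨han, k, hbn⟩ := hinit n hn₁ hn₄
    exact ⟨inl 1 + inr k, by simp [isUnit_iff_isUnit_fst], by ext <;> simp [han, hbn]⟩
  intro n hn
  obtain ⟨z, hz⟩ := Somos4.mem_range (mapRingHom_injective Int.cast_injective)
    (fun n hn => Somos4.rel_of_linearized (hpos n hn).ne' (hrec n hn) (hbrec n hn))
    (fun n hn => (isUnit_iff_isUnit_fst.2 (by simpa using (hpos n hn).ne')).isRegular.left)
    hlift hn
  exact ⟨z.snd, by simpa using (congrArg snd hz).symm⟩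
end

section
/- The odd-indexed and even-indexed Lucas numbers give dual-number solutions of the two Cassini-type recurrences satisfied by the odd-indexed and even-indexed Fibonacci numbers. Precisely, working in the dual numbers over ℤ (with ε^2 = 0), set A_n = F_{2n+1} + L_{2n+1}·ε and Ã_n = F_{2n} + L_{2n}·ε for n ≥ 0, where F_k is the k-th Fibonacci number and L_k = F_{k-1} + F_{k+1} is the k-th Lucas number. Then for all n ≥ 0: A_{n+2}·A_n = A_{n+1}^2 + 1 and Ã_{n+2}·Ã_n = Ã_{n+1}^2 − 1. Equivalently, in addition to the Cassini identities F_{2n+5}F_{2n+1} = F_{2n+3}^2 + 1 and F_{2n+4}F_{2n} = F_{2n+2}^2 − 1, one has L_{2n+5}F_{2n+1} + L_{2n+1}F_{2n+5} = 2·L_{2n+3}F_{2n+3} and L_{2n+4}F_{2n} + L_{2n}F_{2n+4} = 2·L_{2n+2}F_{2n+2}. -/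
/-!
Both `F` and `L` satisfy the Fibonacci recurrence, hence so does `x k = F k + L k ε` in `ℤ[ε]`.
For any sequence with `u (k + 2) = u (k + 1) + u k` in a commutative ring the Cassini form
`u (k + 1) ^ 2 - u k * u (k + 1) - u k ^ 2` only changes sign from one index to the next, which
gives `u (k + 4) * u k = u (k + 2) ^ 2 + (-1) ^ (k + 1) * (u 1 ^ 2 - u 0 * u 1 - u 0 ^ 2)`.
For `x` we have `x 0 = 2ε` and `x 1 = 1 + ε`, so the Cassini form is `1 - 5ε² = 1`, exactly as
for `F` itself.
-/

open DualNumber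

section FibonacciRecurrence

variable {R : Type*} [CommRing R] {u : ℕ → R}

theorem cassini_form_eq_neg_one_pow_mul (hu : ∀ k, u (k + 2) = u (k + 1) + u k) (k : ℕ) :
    u (k + 1) ^ 2 - u k * u (k + 1) - u k ^ 2
      = (-1) ^ k * (u 1 ^ 2 - u 0 * u 1 - u 0 ^ 2) := by
  induction k with
  | zero => ring
  | succ k ih =>
    rw [hu, pow_succ]
    linear_combination (-1 : R) * ih

theorem mul_add_four_eq_sq_add_two_add (hu : ∀ k, u (k + 2) = u (k + 1) + u k) (k : ℕ) :
    u (k + 4) * u k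
      = u (k + 2) ^ 2 + (-1) ^ (k + 1) * (u 1 ^ 2 - u 0 * u 1 - u 0 ^ 2) := by
  have h4 : u (k + 4) = u (k + 3) + u (k + 2) := hu (k + 2)
  have h3 : u (k + 3) = u (k + 2) + u (k + 1) := hu (k + 1)
  rw [h4, h3, hu k, pow_succ]
  linear_combination (-1 : R) * cassini_form_eq_neg_one_pow_mul hu k

end FibonacciRecurrence

theorem lucas_eq_two_mul_fib_succ_sub_fib {L : ℕ → ℤ} (hL0 : L 0 = 2)
    (hL : ∀ k, 1 ≤ k → L k = (Nat.fib (k - 1) : ℤ) + (Nat.fib (k + 1) : ℤ)) (k : ℕ) :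
    L k = 2 * Nat.fib (k + 1) - Nat.fib k := by
  cases k with
  | zero => simp [hL0]
  | succ k =>
    rw [hL (k + 1) k.succ_pos, Nat.add_sub_cancel, Nat.fib_add_two]
    push_cast
    ring

/-- `F k + L k ε`, with `L k` written as `2 F (k + 1) - F k`, which also covers `L 0 = 2`. -/
def fibLucasDual (k : ℕ) : DualNumber ℤ :=
  (Nat.fib k : DualNumber ℤ) + ((2 * Nat.fib (k + 1) - Nat.fib k : ℤ) : DualNumber ℤ) * eps

theorem fibLucasDual_add_two (k : ℕ) :
    fibLucasDual (k + 2) = fibLucasDual (k + 1) + fibLucasDual k := by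
  simp only [fibLucasDual, Nat.fib_add_two]
  push_cast
  ring

theorem fibLucasDual_cassini_form :
    fibLucasDual 1 ^ 2 - fibLucasDual 0 * fibLucasDual 1 - fibLucasDual 0 ^ 2 = 1 := by
  norm_num [fibLucasDual]
  linear_combination (-5 : DualNumber ℤ) * eps_mul_eps (R := ℤ)

theorem fibLucasDual_mul_add_four (k : ℕ) :
    fibLucasDual (k + 4) * fibLucasDual k = fibLucasDual (k + 2) ^ 2 + (-1) ^ (k + 1) := by
  rw [mul_add_four_eq_sq_add_two_add fibLucasDual_add_two, fibLucasDual_cassini_form, mul_one]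

/-- Odd- and even-indexed Lucas numbers give dual-number solutions of the
two Cassini-type recurrences satisfied by the odd- and even-indexed
Fibonacci numbers. -/
theorem lucas_dual_fibonacci_cassini (L : ℕ → ℤ)
    (hL0 : L 0 = 2)
    (hL : ∀ k, 1 ≤ k → L k = (Nat.fib (k - 1) : ℤ) + (Nat.fib (k + 1) : ℤ))
    (A Atilde : ℕ → DualNumber ℤ)
    (hA : ∀ n, A n = (Nat.fib (2 * n + 1) : DualNumber ℤ)
      + (L (2 * n + 1) : DualNumber ℤ) * DualNumber.eps)
    (hAtilde : ∀ n, Atilde n = (Nat.fib (2 * n) : DualNumber ℤ)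
      + (L (2 * n) : DualNumber ℤ) * DualNumber.eps) :
    ∀ n : ℕ, A (n + 2) * A n = A (n + 1) ^ 2 + 1
      ∧ Atilde (n + 2) * Atilde n = Atilde (n + 1) ^ 2 - 1 := by
  have hL' := lucas_eq_two_mul_fib_succ_sub_fib hL0 hL
  have hA' : ∀ n, A n = fibLucasDual (2 * n + 1) := fun n => by rw [hA, hL', fibLucasDual]
  have hAtilde' : ∀ n, Atilde n = fibLucasDual (2 * n) := fun n => by
    rw [hAtilde, hL', fibLucasDual]
  intro n
  constructor
  · rw [hA', hA', hA', show 2 * (n + 2) + 1 = 2 * n + 1 + 4 by ring,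
      show 2 * (n + 1) + 1 = 2 * n + 1 + 2 by ring, fibLucasDual_mul_add_four,
      Even.neg_one_pow ⟨n + 1, by ring⟩]
  · rw [hAtilde', hAtilde', hAtilde', show 2 * (n + 2) = 2 * n + 4 by ring,
      show 2 * (n + 1) = 2 * n + 2 by ring, fibLucasDual_mul_add_four,
      (even_two_mul n).add_one.neg_one_pow, sub_eq_add_neg]
end

section
/- The linearization of the Cassini recurrence for even-indexed Fibonacci numbers, with initial conditions of the form (3p, q), produces integer sequences: let ã_n = F_{2n} for n ≥ 1 (so ã_1 = 1, ã_2 = 3, and ã_{n+2}·ã_n = ã_{n+1}^2 − 1), let p, q be arbitrary integers, set b̃_1 = 3p, b̃_2 = q, and define rational numbers b̃_n for n ≥ 3 by b̃_{n+2} = (2·b̃_{n+1}·ã_{n+1} − b̃_n·ã_{n+2})/ã_n. Then b̃_n is an integer for every n ≥ 1. -/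
/-!
A solution of `A_{n+2} A_n = A_{n+1}² - 1` with `A_n ≠ 0` satisfies `A_{n+2} = t A_{n+1} - A_n`,
where `t` is fixed by the conserved quantity `A_n² - t A_n A_{n+1} + A_{n+1}² = 1`. Linearizing
at `ã` (where `t = 3`) in the direction `t ↦ 3 + c ε` gives `b̃_{n+2} = 3 b̃_{n+1} - b̃_n + c ã_{n+1}`,
and `c`, the `ε`-part of `t = (A_1² + A_2² - 1) / (A_1 A_2)`, is `b̃_2 - 7 b̃_1 / 3 = q - 7p`,
an integer.
-/

theorem Nat.fib_two_mul_add_four_add_fib_two_mul (n : ℕ) :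
    Nat.fib (2 * n + 4) + Nat.fib (2 * n) = 3 * Nat.fib (2 * n + 2) := by
  have h2 : Nat.fib (2 * n + 2) = Nat.fib (2 * n) + Nat.fib (2 * n + 1) := Nat.fib_add_two
  have h3 : Nat.fib (2 * n + 3) = Nat.fib (2 * n + 1) + Nat.fib (2 * n + 2) := Nat.fib_add_two
  have h4 : Nat.fib (2 * n + 4) = Nat.fib (2 * n + 2) + Nat.fib (2 * n + 3) := Nat.fib_add_two
  omega

section LinearizedCassini

variable {F : Type*} [Field F] {t c : F} {a b : ℕ → F}

/-- The `ε`-part of `Q(A_n, A_{n+1})` for `Q(x, y) = x² - t x y + y²` and `A = a + b ε`. -/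
def linearizedCassiniForm (t : F) (a b : ℕ → F) (n : ℕ) : F :=
  2 * a n * b n + 2 * a (n + 1) * b (n + 1) - t * (a n * b (n + 1) + a (n + 1) * b n)

variable {n : ℕ}

theorem linearized_trace_rec_of_form_eq
    (ha : a (n + 2) = t * a (n + 1) - a n) (ha₀ : a n ≠ 0)
    (hb : b (n + 2) = (2 * b (n + 1) * a (n + 1) - b n * a (n + 2)) / a n)
    (hform : linearizedCassiniForm t a b n = c * a n * a (n + 1)) :
    b (n + 2) = t * b (n + 1) - b n + c * a (n + 1) := by
  rw [hb, div_eq_iff ha₀, ha]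
  unfold linearizedCassiniForm at hform
  linear_combination hform

theorem linearizedCassiniForm_succ
    (ha : a (n + 2) = t * a (n + 1) - a n)
    (hb : b (n + 2) = t * b (n + 1) - b n + c * a (n + 1))
    (hform : linearizedCassiniForm t a b n = c * a n * a (n + 1)) :
    linearizedCassiniForm t a b (n + 1) = c * a (n + 1) * a (n + 2) := by
  unfold linearizedCassiniForm at hform ⊢
  rw [ha, hb]
  linear_combination hform

theorem linearized_trace_rec {n₀ : ℕ}
    (ha : ∀ n ≥ n₀, a (n + 2) = t * a (n + 1) - a n) (ha₀ : ∀ n ≥ n₀, a n ≠ 0)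
    (hb : ∀ n ≥ n₀, b (n + 2) = (2 * b (n + 1) * a (n + 1) - b n * a (n + 2)) / a n)
    (hform : linearizedCassiniForm t a b n₀ = c * a n₀ * a (n₀ + 1)) :
    ∀ n ≥ n₀, b (n + 2) = t * b (n + 1) - b n + c * a (n + 1) := by
  have hforms : ∀ n ≥ n₀, linearizedCassiniForm t a b n = c * a n * a (n + 1) := by
    intro n hn
    induction n, hn using Nat.le_induction with
    | base => exact hform
    | succ n hn ih =>
      exact linearizedCassiniForm_succ (ha n hn)
        (linearized_trace_rec_of_form_eq (ha n hn) (ha₀ n hn) (hb n hn) ih) ih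
  exact fun n hn ↦
    linearized_trace_rec_of_form_eq (ha n hn) (ha₀ n hn) (hb n hn) (hforms n hn)

end LinearizedCassini

theorem Subring.mem_of_forall_eq_mul_sub_add {R : Type*} [Ring R] {S : Subring R}
    {u v : ℕ → R} {t : R} {n₀ : ℕ} (ht : t ∈ S) (hv : ∀ n ≥ n₀, v n ∈ S)
    (hu : ∀ n ≥ n₀, u (n + 2) = t * u (n + 1) - u n + v n)
    (hu₀ : u n₀ ∈ S) (hu₁ : u (n₀ + 1) ∈ S) :
    ∀ n ≥ n₀, u n ∈ S := by
  suffices h : ∀ n ≥ n₀, u n ∈ S ∧ u (n + 1) ∈ S from fun n hn ↦ (h n hn).1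
  intro n hn
  induction n, hn using Nat.le_induction with
  | base => exact ⟨hu₀, hu₁⟩
  | succ n hn ih =>
    refine ⟨ih.2, ?_⟩
    rw [hu n hn]
    exact S.add_mem (S.sub_mem (S.mul_mem ht ih.2) ih.1) (hv n hn)

/-- The linearization of the Cassini recurrence for even-indexed Fibonacci
numbers, with initial conditions of the form (3p, q), produces integer
sequences. -/
theorem even_fibonacci_cassini_linearization_integer (atilde : ℕ → ℚ)
    (ha : ∀ n, 1 ≤ n → atilde n = (Nat.fib (2 * n) : ℚ))
    (p q : ℤ) (btilde : ℕ → ℚ)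
    (hb1 : btilde 1 = 3 * (p : ℚ)) (hb2 : btilde 2 = (q : ℚ))
    (hbrec : ∀ n, 1 ≤ n →
      btilde (n + 2) = (2 * btilde (n + 1) * atilde (n + 1)
        - btilde n * atilde (n + 2)) / atilde n) :
    ∀ n, 1 ≤ n → ∃ k : ℤ, btilde n = (k : ℚ) := by
  have ha_rec : ∀ n ≥ 1, atilde (n + 2) = 3 * atilde (n + 1) - atilde n := by
    intro n hn
    rw [ha n hn, ha (n + 1) (by omega), ha (n + 2) (by omega), eq_sub_iff_add_eq,
      mul_add, mul_add]
    exact_mod_cast Nat.fib_two_mul_add_four_add_fib_two_mul n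
  have ha_ne : ∀ n ≥ 1, atilde n ≠ 0 := fun n hn ↦ by
    rw [ha n hn]; exact_mod_cast (Nat.fib_pos.mpr (by omega)).ne'
  have hform : linearizedCassiniForm 3 atilde btilde 1 =
      (q - 7 * p : ℤ) * atilde 1 * atilde 2 := by
    rw [linearizedCassiniForm, ha 1 le_rfl, ha 2 (by norm_num), hb1, hb2]
    norm_num [Nat.fib_add_two]
    ring
  have hb_rec := linearized_trace_rec ha_rec ha_ne hbrec hform
  have hZ (k : ℤ) : (k : ℚ) ∈ (Int.castRingHom ℚ).range := ⟨k, rfl⟩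
  intro n hn
  have hint : btilde n ∈ (Int.castRingHom ℚ).range := by
    refine Subring.mem_of_forall_eq_mul_sub_add (by exact_mod_cast hZ 3) (fun m hm ↦ ?_) hb_rec
      (by rw [hb1]; exact_mod_cast hZ (3 * p)) (hb2 ▸ hZ q) n hn
    rw [ha (m + 1) (by omega)]
    exact_mod_cast hZ _
  obtain ⟨k, hk⟩ := hint
  exact ⟨k, hk.symm⟩
end

section
/- The sequence A005246 satisfies a linear recurrence: if (a_n)_{n≥1} is the sequence of rational numbers defined by a_1 = a_2 = a_3 = 1 and a_{n+3} = (a_{n+2}·a_{n+1} + 1)/a_n for n ≥ 1, then a_n is a positive integer for every n and a_{n+4} = 4·a_{n+2} − a_n for all n ≥ 1. -/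
/-!
The ratio `(a n + a (n + 2)) / a (n + 1)` is invariant under `n ↦ n + 2` for any solution of
`a (n + 3) * a n = a (n + 2) * a (n + 1) + 1`, and here it alternates between `2` and `3`.
Conversely, the integer sequence with `b (n + 2) = c n * b (n + 1) - b n`, where `c` alternates
between `3` and `2`, has constant `b (n + 3) * b n - b (n + 2) * b (n + 1)`, equal to `1` for the
right initial values, so it solves the nonlinear recurrence and therefore is A005246. Combining
two steps of the linear recurrence gives `b (n + 4) = (c n * c (n + 1) - 2) * b (n + 2) - b n`,
and `3 * 2 - 2 = 4`.
-/

section LinearRecurrence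

variable {R : Type*} {b c : ℕ → R}

theorem mul_sub_mul_eq_of_periodic_coeff [CommRing R]
    (hb : ∀ n, b (n + 2) = c n * b (n + 1) - b n) (hc : ∀ n, c (n + 2) = c n) (n : ℕ) :
    b (n + 3) * b n - b (n + 2) * b (n + 1) = b 3 * b 0 - b 2 * b 1 := by
  induction n with
  | zero => rfl
  | succ n ih =>
    rw [← ih]
    linear_combination b (n + 1) * hb (n + 2) - b (n + 3) * hb n
      + b (n + 1) * b (n + 3) * hc n

theorem four_step_of_periodic_coeff [CommRing R]
    (hb : ∀ n, b (n + 2) = c n * b (n + 1) - b n) (hc : ∀ n, c (n + 2) = c n)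
    {k : R} (hk : ∀ n, c n * c (n + 1) = k) (n : ℕ) :
    b (n + 4) = (k - 2) * b (n + 2) - b n := by
  linear_combination hb (n + 2) + hb n + c n * hb (n + 1) + b (n + 3) * hc n
    + b (n + 2) * hk n

theorem pos_and_le_succ_of_two_le_coeff [CommRing R] [LinearOrder R] [IsStrictOrderedRing R]
    (hb : ∀ n, b (n + 2) = c n * b (n + 1) - b n) (hc : ∀ n, 2 ≤ c n)
    (h0 : 0 < b 0) (h01 : b 0 ≤ b 1) (n : ℕ) : 0 < b n ∧ b n ≤ b (n + 1) := by
  induction n with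
  | zero => exact ⟨h0, h01⟩
  | succ n ih =>
    obtain ⟨hpos, hle⟩ := ih
    refine ⟨hpos.trans_le hle, ?_⟩
    have := mul_le_mul_of_nonneg_right (hc n) (hpos.trans_le hle).le
    rw [hb n]
    linarith

end LinearRecurrence

theorem eq_of_third_order_recurrence {α : Type*} (F : ℕ → α → α → α → α) {a b : ℕ → α}
    (ha : ∀ n, a (n + 3) = F n (a n) (a (n + 1)) (a (n + 2)))
    (hb : ∀ n, b (n + 3) = F n (b n) (b (n + 1)) (b (n + 2)))
    (h0 : a 0 = b 0) (h1 : a 1 = b 1) (h2 : a 2 = b 2) : a = b := by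
  suffices h : ∀ n, a n = b n ∧ a (n + 1) = b (n + 1) ∧ a (n + 2) = b (n + 2) from
    funext fun n ↦ (h n).1
  intro n
  induction n with
  | zero => exact ⟨h0, h1, h2⟩
  | succ n ih =>
    obtain ⟨e0, e1, e2⟩ := ih
    exact ⟨e1, e2, by rw [ha, hb, e0, e1, e2]⟩

namespace A005246

def coeff (n : ℕ) : ℤ := if Even n then 3 else 2

/-- `seq n = a n` for `n ≥ 1`; the value `seq 0 = 2` is the backward continuation of the
nonlinear recurrence, which makes the invariant `seq 3 * seq 0 - seq 2 * seq 1` equal to `1`. -/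
def seq : ℕ → ℤ
  | 0 => 2
  | 1 => 1
  | n + 2 => coeff n * seq (n + 1) - seq n

theorem seq_add_two (n : ℕ) : seq (n + 2) = coeff n * seq (n + 1) - seq n := rfl

theorem coeff_add_two (n : ℕ) : coeff (n + 2) = coeff n := by
  simp [coeff, Nat.even_add]

theorem coeff_mul_coeff_succ (n : ℕ) : coeff n * coeff (n + 1) = 6 := by
  rcases Nat.even_or_odd n with h | h <;> simp [coeff, Nat.even_add_one, h]

theorem two_le_coeff (n : ℕ) : 2 ≤ coeff n := by
  unfold coeff; split <;> norm_num

theorem seq_somos (n : ℕ) : seq (n + 3) * seq n = seq (n + 2) * seq (n + 1) + 1 := by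
  linear_combination mul_sub_mul_eq_of_periodic_coeff seq_add_two coeff_add_two n
    + (by decide : seq 3 * seq 0 - seq 2 * seq 1 = 1)

theorem seq_succ_pos (n : ℕ) : 0 < seq (n + 1) :=
  (pos_and_le_succ_of_two_le_coeff (b := fun n ↦ seq (n + 1)) (fun n ↦ seq_add_two (n + 1))
    (fun n ↦ two_le_coeff (n + 1)) (by decide) (by decide) n).1

theorem seq_add_four (n : ℕ) : seq (n + 4) = 4 * seq (n + 2) - seq n := by
  linear_combination four_step_of_periodic_coeff seq_add_two coeff_add_two
    coeff_mul_coeff_succ n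

end A005246

open A005246 in
/-- The sequence A005246 consists of positive integers and satisfies the
linear recurrence a_{n+4} = 4 a_{n+2} - a_n. -/
theorem A005246_linear_recurrence (a : ℕ → ℚ)
    (h1 : a 1 = 1) (h2 : a 2 = 1) (h3 : a 3 = 1)
    (hrec : ∀ n, 1 ≤ n → a (n + 3) = (a (n + 2) * a (n + 1) + 1) / a n) :
    (∀ n, 1 ≤ n → ∃ k : ℤ, 0 < k ∧ a n = (k : ℚ))
    ∧ (∀ n, 1 ≤ n → a (n + 4) = 4 * a (n + 2) - a n) := by
  have ha : (fun n ↦ a (n + 1)) = fun n ↦ (seq (n + 1) : ℚ) := by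
    refine eq_of_third_order_recurrence (fun _ x y z ↦ (z * y + 1) / x)
      (fun n ↦ hrec (n + 1) (Nat.le_add_left 1 n)) (fun n ↦ ?_) ?_ ?_ ?_
    · rw [eq_div_iff (by exact_mod_cast (seq_succ_pos n).ne')]
      exact_mod_cast seq_somos (n + 1)
    all_goals simp [h1, h2, h3, seq, coeff]
  have hseq (n : ℕ) (hn : 1 ≤ n) : a n = seq n := by
    obtain ⟨m, rfl⟩ := Nat.exists_eq_add_of_le' hn
    exact congrFun ha m
  refine ⟨fun n hn ↦ ?_, fun n hn ↦ ?_⟩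
  · obtain ⟨m, rfl⟩ := Nat.exists_eq_add_of_le' hn
    exact ⟨seq (m + 1), seq_succ_pos m, hseq _ hn⟩
  · rw [hseq _ (by omega), hseq _ (by omega), hseq _ hn]
    exact_mod_cast seq_add_four n
end

section
/- The non-linear extension of the sequence A005246 is integer: let (a_n)_{n≥1} be defined by a_1 = a_2 = a_3 = 1 and a_{n+3} = (a_{n+2}·a_{n+1} + 1)/a_n (every a_n is a positive integer), let w and b_1, b_2, b_3 be arbitrary integers, and define rational numbers b_n for n ≥ 4 by b_{n+3} = (b_{n+2}·a_{n+1} + b_{n+1}·a_{n+2} − b_n·a_{n+3} + w)/a_n. Then b_n is an integer for every n ≥ 1. -/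
/-!
Put `X n = a (n + 1) + b (n + 1) ε` in the dual numbers `ℚ[ε]`; then
`X (n + 3) * X n = X (n + 2) * X (n + 1) + (1 + w ε)`, and every `X n` is a unit because `a` is
positive. For any recurrence `x (n + 3) * x n = x (n + 2) * x (n + 1) + k` with regular terms the
ratio `(x n + x (n + 2)) / x (n + 1)` is 2-periodic, so `x` satisfies a linear recurrence
`x (n + 2) = c * x (n + 1) - x n` whose two alternating coefficients are read off from the first
four terms. For `X` they lie in `ℤ[ε]`, hence so does every `X n`.
-/

open DualNumber TrivSqZeroExt

variable {R : Type*} [CommRing R]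

section ProductRecurrence

variable {k : R} {x : ℕ → R}

theorem productRecurrence_linear_step
    (hx : ∀ n, x (n + 3) * x n = x (n + 2) * x (n + 1) + k) {n : ℕ}
    (hreg : IsLeftRegular (x (n + 1))) {c : R} (hc : x (n + 1) * c = x n + x (n + 2)) :
    x (n + 3) * c = x (n + 2) + x (n + 4) := by
  apply hreg
  linear_combination x (n + 3) * hc + hx n - hx (n + 1)

theorem productRecurrence_mem_subring (S : Subring R)
    (hx : ∀ n, x (n + 3) * x n = x (n + 2) * x (n + 1) + k) (hreg : ∀ n, IsLeftRegular (x n))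
    (h₀ : x 0 ∈ S) (h₁ : x 1 ∈ S) (hc₀ : ∃ c ∈ S, x 1 * c = x 0 + x 2)
    (hc₁ : ∃ c ∈ S, x 2 * c = x 1 + x 3) (n : ℕ) : x n ∈ S := by
  have hc : ∀ n, ∃ c ∈ S, x (n + 1) * c = x n + x (n + 2) := by
    refine Nat.twoStepInduction hc₀ hc₁ fun n ih _ => ?_
    obtain ⟨c, hcS, hc⟩ := ih
    exact ⟨c, hcS, productRecurrence_linear_step hx (hreg _) hc⟩
  induction n using Nat.twoStepInduction with
  | zero => exact h₀
  | one => exact h₁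
  | more n ih₀ ih₁ =>
    obtain ⟨c, hcS, hc⟩ := hc n
    rw [eq_sub_of_add_eq' hc.symm]
    exact sub_mem (mul_mem ih₁ hcS) ih₀

end ProductRecurrence

theorem productRecurrence_pos {K : Type*} [Field K] [LinearOrder K] [IsStrictOrderedRing K]
    {k : K} (hk : 0 ≤ k) {x : ℕ → K}
    (hx : ∀ n, x (n + 3) = (x (n + 2) * x (n + 1) + k) / x n)
    (h₀ : 0 < x 0) (h₁ : 0 < x 1) (h₂ : 0 < x 2) (n : ℕ) : 0 < x n := by
  suffices ∀ n, 0 < x n ∧ 0 < x (n + 1) ∧ 0 < x (n + 2) from (this n).1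
  intro n
  induction n with
  | zero => exact ⟨h₀, h₁, h₂⟩
  | succ n ih =>
    obtain ⟨ih₀, ih₁, ih₂⟩ := ih
    refine ⟨ih₁, ih₂, ?_⟩
    rw [hx]
    positivity

theorem productRecurrence_dualNumber {K : Type*} [Field K] {k w : K} {a b : ℕ → K}
    (ha : ∀ n, a (n + 3) = (a (n + 2) * a (n + 1) + k) / a n)
    (hb : ∀ n, b (n + 3) =
      (b (n + 2) * a (n + 1) + b (n + 1) * a (n + 2) - b n * a (n + 3) + w) / a n)
    (ha₀ : ∀ n, a n ≠ 0) (n : ℕ) :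
    (inl (a (n + 3)) + inr (b (n + 3)) : K[ε]) * (inl (a n) + inr (b n)) =
      (inl (a (n + 2)) + inr (b (n + 2))) * (inl (a (n + 1)) + inr (b (n + 1))) +
        (inl k + inr w) := by
  have := ha₀ n
  ext
  · simp only [fst_mul, fst_add, fst_inl, fst_inr, add_zero, ha n]
    field_simp
  · simp only [DualNumber.snd_mul, fst_add, snd_add, fst_inl, fst_inr, snd_inl, snd_inr,
      add_zero, zero_add, hb n]
    field_simp
    ring

def Subring.dualNumber (T : Subring R) : Subring R[ε] where
  carrier := {x | x.fst ∈ T ∧ x.snd ∈ T}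
  mul_mem' {x y} hx hy :=
    ⟨mul_mem hx.1 hy.1, (DualNumber.snd_mul x y).symm ▸ add_mem (mul_mem hx.1 hy.2) (mul_mem hx.2 hy.1)⟩
  one_mem' := ⟨T.one_mem, T.zero_mem⟩
  add_mem' hx hy := ⟨add_mem hx.1 hy.1, add_mem hx.2 hy.2⟩
  zero_mem' := ⟨T.zero_mem, T.zero_mem⟩
  neg_mem' hx := ⟨neg_mem hx.1, neg_mem hx.2⟩

theorem Subring.mem_dualNumber {T : Subring R} {x : R[ε]} :
    x ∈ T.dualNumber ↔ x.fst ∈ T ∧ x.snd ∈ T :=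
  Iff.rfl

theorem Subring.inl_add_inr_mem_dualNumber {T : Subring R} {r m : R} (hr : r ∈ T) (hm : m ∈ T) :
    inl r + inr m ∈ T.dualNumber := by
  simpa [mem_dualNumber] using ⟨hr, hm⟩

/-- The non-linear extension of the sequence A005246 is integer. -/
theorem A005246_nonlinear_extension_integer (a : ℕ → ℚ)
    (h1 : a 1 = 1) (h2 : a 2 = 1) (h3 : a 3 = 1)
    (hrec : ∀ n, 1 ≤ n → a (n + 3) = (a (n + 2) * a (n + 1) + 1) / a n)
    (w : ℤ) (b : ℕ → ℚ) (b1 b2 b3 : ℤ)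
    (hb1 : b 1 = (b1 : ℚ)) (hb2 : b 2 = (b2 : ℚ)) (hb3 : b 3 = (b3 : ℚ))
    (hbrec : ∀ n, 1 ≤ n →
      b (n + 3) = (b (n + 2) * a (n + 1) + b (n + 1) * a (n + 2)
        - b n * a (n + 3) + (w : ℚ)) / a n) :
    ∀ n, 1 ≤ n → ∃ k : ℤ, b n = (k : ℚ) := by
  have hrec' (n : ℕ) := hrec (n + 1) n.succ_pos
  have hbrec' (n : ℕ) := hbrec (n + 1) n.succ_pos
  have hpos : ∀ n, 0 < a (n + 1) :=
    productRecurrence_pos zero_le_one hrec' (by simp [h1]) (by simp [h2]) (by simp [h3])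
  have ha4 : a 4 = 2 := by rw [hrec' 0, h1, h2, h3]; norm_num
  have hb4 : b 4 = b3 + b2 - 2 * b1 + w := by
    rw [hbrec' 0, h1, h2, h3, ha4, hb1, hb2, hb3]; ring
  set X : ℕ → ℚ[ε] := fun n => inl (a (n + 1)) + inr (b (n + 1))
  have hint (r s : ℤ) : inl (r : ℚ) + inr (s : ℚ) ∈ (⊥ : Subring ℚ).dualNumber :=
    Subring.inl_add_inr_mem_dualNumber (intCast_mem _ r) (intCast_mem _ s)
  have hX := productRecurrence_mem_subring (⊥ : Subring ℚ).dualNumber (x := X)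
    (productRecurrence_dualNumber hrec' hbrec' fun n => (hpos n).ne')
    (fun n => (isUnit_iff_isUnit_fst.2 (by simpa [X] using (hpos n).ne')).isRegular.left)
    (by simpa [X, h1, hb1] using hint 1 b1) (by simpa [X, h2, hb2] using hint 1 b2)
    ⟨_, hint 2 (b1 + b3 - 2 * b2), by ext <;> simp [X, h1, h2, h3, hb1, hb2, hb3] <;> ring⟩
    ⟨_, hint 3 (2 * b2 - 2 * b3 - 2 * b1 + w),
      by ext <;> simp [X, h2, h3, ha4, hb2, hb3, hb4] <;> ring⟩
  intro n hn
  obtain ⟨k, hk⟩ := Subring.mem_bot.1 (hX (n - 1)).2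
  exact ⟨k, by simpa [X, Nat.sub_add_cancel hn] using hk.symm⟩
end

section
/- The period-6 alternating-sign non-linear extension of the sequence A005246 is integer: let (a_n)_{n≥1} be defined by a_1 = a_2 = a_3 = 1 and a_{n+3} = (a_{n+2}·a_{n+1} + 1)/a_n (every a_n is a positive integer), let b_1, b_2, b_3 be arbitrary integers, and define rational numbers b_n for n ≥ 4 by b_{n+3} = (b_{n+2}·a_{n+1} + b_{n+1}·a_{n+2} − b_n·a_{n+3} + s_n·a_{n+2}·a_{n+1})/a_n, where s_n = +1 if n mod 6 ∈ {1, 2, 3} and s_n = −1 if n mod 6 ∈ {4, 5, 0}. Then b_n is an integer for every n ≥ 1. -/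
/-!
The Somos-type relation at `n` and `n + 1` gives
`a (n+1) * (a (n+4) + a (n+2)) = a (n+3) * (a (n+2) + a n)`, so `a` satisfies a three-term
relation `a (n+2) + a n = k n * a (n+1)` with `k` 2-periodic (alternately 2 and 3). The same
computation on the ε-parts shows that the defect `m n = b (n+2) + b n - k n * b (n+1)` satisfies
`a (n+1) * m (n+2) - a (n+3) * m n = a (n+2) * (s (n+1) * a (n+3) - s n * a (n+1))`.
As `s (n+3) = -s n`, this is solved by `m n = s (n+1) * a n + c n * a (n+1)` with the integers
`c (n+2) = c n + k n * s (n+1)`. Hence `b (n+2) = k n * b (n+1) - b n + m n` is an integer.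
-/

variable {K : Type*} [Field K]

def linDefect (k x : ℕ → K) (n : ℕ) : K := x (n + 2) + x n - k n * x (n + 1)

theorem pos_of_somos [LinearOrder K] [IsStrictOrderedRing K] {a : ℕ → K}
    (h0 : 0 < a 0) (h1 : 0 < a 1) (h2 : 0 < a 2)
    (hrec : ∀ n, a (n + 3) = (a (n + 2) * a (n + 1) + 1) / a n) (n : ℕ) : 0 < a n := by
  induction n using Nat.strong_induction_on with
  | _ n ih =>
    match n, ih with
    | 0, _ => exact h0
    | 1, _ => exact h1
    | 2, _ => exact h2
    | n + 3, ih =>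
      rw [hrec]
      exact div_pos (add_pos (mul_pos (ih _ (by omega)) (ih _ (by omega))) one_pos)
        (ih n (by omega))

theorem linDefect_eq_zero_of_somos {a k : ℕ → K} (ha : ∀ n, a n ≠ 0)
    (hsomos : ∀ n, a (n + 3) * a n = a (n + 2) * a (n + 1) + 1) (hk : ∀ n, k (n + 2) = k n)
    (h0 : linDefect k a 0 = 0) (h1 : linDefect k a 1 = 0) (n : ℕ) : linDefect k a n = 0 := by
  induction n using Nat.twoStepInduction with
  | zero => exact h0
  | one => exact h1
  | more n ih _ =>
    unfold linDefect at ih ⊢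
    refine mul_left_cancel₀ (ha (n + 1)) ?_
    rw [hk]
    linear_combination hsomos (n + 1) - hsomos n + a (n + 3) * ih

theorem linDefect_linearized {a b s k : ℕ → K} (hk : ∀ n, k (n + 2) = k n)
    (ha : ∀ n, linDefect k a n = 0)
    (hb : ∀ n, a n * b (n + 3) = b (n + 2) * a (n + 1) + b (n + 1) * a (n + 2)
      - b n * a (n + 3) + s n * a (n + 2) * a (n + 1)) (n : ℕ) :
    a (n + 1) * linDefect k b (n + 2) - a (n + 3) * linDefect k b n
      = a (n + 2) * (s (n + 1) * a (n + 3) - s n * a (n + 1)) := by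
  have h0 := ha n
  have h2 := ha (n + 2)
  have hb1 := hb (n + 1)
  simp only [linDefect, add_assoc, Nat.reduceAdd, hk] at h0 h2 hb1 ⊢
  linear_combination hb1 - hb n + b (n + 3) * h0 - b (n + 1) * h2

theorem exists_linDefect_eq (S : Subring K) {a b s k : ℕ → K} (ha0 : ∀ n, a n ≠ 0)
    (hk : ∀ n, k (n + 2) = k n) (ha : ∀ n, linDefect k a n = 0)
    (hb : ∀ n, a n * b (n + 3) = b (n + 2) * a (n + 1) + b (n + 1) * a (n + 2)
      - b n * a (n + 3) + s n * a (n + 2) * a (n + 1))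
    (hs : ∀ n, s (n + 3) = -s n) (hkS : ∀ n, k n ∈ S) (hsS : ∀ n, s n ∈ S)
    (h0 : ∃ c ∈ S, linDefect k b 0 = s 1 * a 0 + c * a 1)
    (h1 : ∃ c ∈ S, linDefect k b 1 = s 2 * a 1 + c * a 2) (n : ℕ) :
    ∃ c ∈ S, linDefect k b n = s (n + 1) * a n + c * a (n + 1) := by
  induction n using Nat.twoStepInduction with
  | zero => exact h0
  | one => exact h1
  | more n ih _ =>
    obtain ⟨c, hcS, hc⟩ := ih
    refine ⟨c + k n * s (n + 1), add_mem hcS (mul_mem (hkS n) (hsS (n + 1))), ?_⟩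
    refine mul_left_cancel₀ (ha0 (n + 1)) ?_
    have hn := ha n
    unfold linDefect at hn
    linear_combination linDefect_linearized hk ha hb n + a (n + 3) * hc
      + s (n + 1) * a (n + 3) * hn - a (n + 1) * a (n + 2) * hs n

theorem linDefect_mem (S : Subring K) {k x : ℕ → K} {n : ℕ} (hk : k n ∈ S) (h0 : x n ∈ S)
    (h1 : x (n + 1) ∈ S) (h2 : x (n + 2) ∈ S) : linDefect k x n ∈ S :=
  sub_mem (add_mem h2 h0) (mul_mem hk h1)

theorem mem_of_linDefect_mem (S : Subring K) {k x : ℕ → K} (hk : ∀ n, k n ∈ S)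
    (h0 : x 0 ∈ S) (h1 : x 1 ∈ S) (hd : ∀ n, linDefect k x n ∈ S) (n : ℕ) :
    x n ∈ S := by
  induction n using Nat.twoStepInduction with
  | zero => exact h0
  | one => exact h1
  | more n ih0 ih1 =>
    have : x (n + 2) = linDefect k x n - x n + k n * x (n + 1) := by unfold linDefect; ring
    rw [this]
    exact add_mem (sub_mem (hd n) ih0) (mul_mem (hk n) ih1)

def a005246Multiplier (n : ℕ) : K := if Even n then 2 else 3

theorem a005246Multiplier_add_two (n : ℕ) :
    a005246Multiplier (n + 2) = (a005246Multiplier n : K) := by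
  simp [a005246Multiplier, parity_simps]

theorem a005246Multiplier_mem (S : Subring K) (n : ℕ) : (a005246Multiplier n : K) ∈ S := by
  unfold a005246Multiplier
  split_ifs <;> exact ofNat_mem S _

section Ordered

variable [LinearOrder K] [IsStrictOrderedRing K]

theorem linDefect_A005246 {a : ℕ → K} (h0 : a 0 = 1) (h1 : a 1 = 1) (h2 : a 2 = 1)
    (hrec : ∀ n, a (n + 3) = (a (n + 2) * a (n + 1) + 1) / a n) (n : ℕ) :
    linDefect a005246Multiplier a n = 0 := by
  have hpos := pos_of_somos (by simp [h0]) (by simp [h1]) (by simp [h2]) hrec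
  have ha3 : a 3 = 2 := by rw [hrec, h0, h1, h2]; norm_num
  refine linDefect_eq_zero_of_somos (fun n => (hpos n).ne') (fun n => ?_)
    a005246Multiplier_add_two ?_ ?_ n
  · rw [hrec n, div_mul_cancel₀ _ (hpos n).ne']
  · norm_num [linDefect, a005246Multiplier, h0, h1, h2]
  · norm_num [linDefect, a005246Multiplier, h1, h2, ha3]

theorem mem_of_linearized_A005246 (S : Subring K) {a b s : ℕ → K} (h0 : a 0 = 1) (h1 : a 1 = 1)
    (h2 : a 2 = 1) (hrec : ∀ n, a (n + 3) = (a (n + 2) * a (n + 1) + 1) / a n)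
    (hb : ∀ n, b (n + 3) = (b (n + 2) * a (n + 1) + b (n + 1) * a (n + 2)
      - b n * a (n + 3) + s n * a (n + 2) * a (n + 1)) / a n)
    (hs : ∀ n, s (n + 3) = -s n) (hsS : ∀ n, s n ∈ S)
    (hb0 : b 0 ∈ S) (hb1 : b 1 ∈ S) (hb2 : b 2 ∈ S) (n : ℕ) : b n ∈ S := by
  have hpos := pos_of_somos (by simp [h0]) (by simp [h1]) (by simp [h2]) hrec
  have hkS := a005246Multiplier_mem (K := K) S
  have haS : ∀ n, a n ∈ S := mem_of_linDefect_mem S hkS (h0 ▸ one_mem S) (h1 ▸ one_mem S)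
    fun n => linDefect_A005246 h0 h1 h2 hrec n ▸ zero_mem S
  have hbmul : ∀ n, a n * b (n + 3) = b (n + 2) * a (n + 1) + b (n + 1) * a (n + 2)
      - b n * a (n + 3) + s n * a (n + 2) * a (n + 1) :=
    fun n => by rw [hb n, mul_div_cancel₀ _ (hpos n).ne']
  have hb3 : b 3 ∈ S := by
    rw [← one_mul (b 3), ← h0, hbmul 0]
    aesop
  have hm := exists_linDefect_eq S (fun n => (hpos n).ne') a005246Multiplier_add_two
    (linDefect_A005246 h0 h1 h2 hrec) hbmul hs hkS hsS
    ⟨_, sub_mem (linDefect_mem S (hkS 0) hb0 hb1 hb2) (hsS 1), by rw [h0, h1]; ring⟩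
    ⟨_, sub_mem (linDefect_mem S (hkS 1) hb1 hb2 hb3) (hsS 2), by rw [h1, h2]; ring⟩
  refine mem_of_linDefect_mem S hkS hb0 hb1 (fun n => ?_) n
  obtain ⟨c, hcS, hc⟩ := hm n
  rw [hc]
  exact add_mem (mul_mem (hsS _) (haS n)) (mul_mem hcS (haS _))

end Ordered

/-- The period-6 alternating-sign non-linear extension of the sequence
A005246 is integer: the sign `s n` is +1 for n ≡ 1, 2, 3 (mod 6) and −1
for n ≡ 4, 5, 0 (mod 6). -/
theorem A005246_alternating_extension_integer (a : ℕ → ℚ)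
    (h1 : a 1 = 1) (h2 : a 2 = 1) (h3 : a 3 = 1)
    (hrec : ∀ n, 1 ≤ n → a (n + 3) = (a (n + 2) * a (n + 1) + 1) / a n)
    (b : ℕ → ℚ) (b1 b2 b3 : ℤ)
    (hb1 : b 1 = (b1 : ℚ)) (hb2 : b 2 = (b2 : ℚ)) (hb3 : b 3 = (b3 : ℚ))
    (s : ℕ → ℚ)
    (hs : ∀ n, s n = if n % 6 = 1 ∨ n % 6 = 2 ∨ n % 6 = 3 then 1 else -1)
    (hbrec : ∀ n, 1 ≤ n →
      b (n + 3) = (b (n + 2) * a (n + 1) + b (n + 1) * a (n + 2)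
        - b n * a (n + 3) + s n * a (n + 2) * a (n + 1)) / a n) :
    ∀ n, 1 ≤ n → ∃ k : ℤ, b n = (k : ℚ) := by
  intro n hn
  obtain ⟨n, rfl⟩ := Nat.exists_eq_add_of_le' hn
  have hs_antiperiodic : ∀ m, s (m + 3) = -s m := fun m => by
    rw [hs, hs]; split_ifs <;> first | omega | norm_num
  have hsS : ∀ m, s m ∈ (⊥ : Subring ℚ) := fun m => by
    rw [hs]; split_ifs <;> simp
  obtain ⟨k, hk⟩ := Subring.mem_bot.mp <| mem_of_linearized_A005246 ⊥
    (a := fun n => a (n + 1)) (b := fun n => b (n + 1)) (s := fun n => s (n + 1)) h1 h2 h3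
    (fun n => hrec (n + 1) (by omega)) (fun n => hbrec (n + 1) (by omega))
    (fun n => hs_antiperiodic (n + 1)) (fun n => hsS (n + 1))
    (hb1 ▸ intCast_mem ⊥ b1) (hb2 ▸ intCast_mem ⊥ b2) (hb3 ▸ intCast_mem ⊥ b3) n
  exact ⟨k, hk.symm⟩
end

section
/- Integrality of the non-homogeneous Somos-4 sequences: let p ≥ 1 and q ≥ 1 be integers, and let (a_n)_{n≥1} be the sequence of rational numbers defined by a_1 = a_2 = a_3 = a_4 = 1 and a_{n+4} = (a_{n+3}^p·a_{n+1}^p + a_{n+2}^q)/a_n for n ≥ 1. Then a_n is a positive integer for every n ≥ 1. -/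
/-!
Run the recurrence in `ℤ`, dividing with `/`. Since `p, q ≥ 1`, each of `b (n + 1)`, `b (n + 2)`,
`b (n + 3)` divides one summand of `b (n + 4) * b n` and is coprime to the other, so terms at
distance at most three stay pairwise coprime. Modulo `x = b (n + 4)` the recurrences at
`n, …, n + 3` turn `rhs (n + 4) * b (n + 1) ^ p * b (n + 2) ^ q * b (n + 3) ^ p` into a multiple of
`rhs n ≡ 0`, and the cofactor is coprime to `x`; hence every division is exact, the integer
sequence satisfies the recurrence, is positive by induction, and coincides with the rational one.
-/

namespace Somos4

variable (p q : ℕ)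

def rhs {R : Type*} [CommSemiring R] (b : ℕ → R) (n : ℕ) : R :=
  b (n + 3) ^ p * b (n + 1) ^ p + b (n + 2) ^ q

theorem map_rhs {R S : Type*} [CommSemiring R] [CommSemiring S] (f : R →+* S) (b : ℕ → R)
    (n : ℕ) : f (rhs p q b n) = rhs p q (f ∘ b) n := by
  simp [rhs]

variable {p q}

theorem pos_of_mul_eq_rhs {R : Type*} [CommSemiring R] [LinearOrder R] [IsStrictOrderedRing R]
    {b : ℕ → R} (h0 : ∀ i < 4, 0 < b i) (hrec : ∀ n, b (n + 4) * b n = rhs p q b n) :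
    ∀ n, 0 < b n
  | 0 | 1 | 2 | 3 => h0 _ (by norm_num)
  | n + 4 => by
    have := pos_of_mul_eq_rhs h0 hrec (n + 1)
    have := pos_of_mul_eq_rhs h0 hrec (n + 2)
    have := pos_of_mul_eq_rhs h0 hrec (n + 3)
    have hr : 0 < rhs p q b n := by unfold rhs; positivity
    exact pos_of_mul_pos_left (hrec n ▸ hr) (pos_of_mul_eq_rhs h0 hrec n).le

section CommRing

variable {R : Type*} [CommRing R]

theorem isCoprime_add_four (hp : p ≠ 0) (hq : q ≠ 0) {b : ℕ → R} {n : ℕ}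
    (hrec : b (n + 4) * b n = rhs p q b n) (h12 : IsCoprime (b (n + 1)) (b (n + 2)))
    (h23 : IsCoprime (b (n + 2)) (b (n + 3))) :
    IsCoprime (b (n + 1)) (b (n + 4)) ∧ IsCoprime (b (n + 2)) (b (n + 4)) ∧
      IsCoprime (b (n + 3)) (b (n + 4)) := by
  obtain ⟨p, rfl⟩ := Nat.exists_eq_add_one_of_ne_zero hp
  obtain ⟨q, rfl⟩ := Nat.exists_eq_add_one_of_ne_zero hq
  have of_rhs {x y : R} (z : R) (h : IsCoprime x y) (e : rhs (p + 1) (q + 1) b n = y + x * z) :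
      IsCoprime x (b (n + 4)) := by
    rw [← hrec] at e
    exact (e ▸ h.add_mul_left_right z).of_mul_right_left
  refine ⟨of_rhs (b (n + 1) ^ p * b (n + 3) ^ (p + 1)) (h12.pow_right (n := q + 1)) ?_,
    of_rhs (b (n + 2) ^ q)
      ((h23.pow_right (n := p + 1)).mul_right (h12.symm.pow_right (n := p + 1))) ?_,
    of_rhs (b (n + 3) ^ p * b (n + 1) ^ (p + 1)) (h23.symm.pow_right (n := q + 1)) ?_⟩ <;>
  · unfold rhs; ring

def NearCoprime (b : ℕ → R) (n : ℕ) : Prop :=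
  ∀ i j, i < j → j < i + 4 → j < n → IsCoprime (b i) (b j)

theorem nearCoprime_add_four (hp : p ≠ 0) (hq : q ≠ 0) {b : ℕ → R} (h0 : NearCoprime b 4) :
    ∀ {n}, (∀ m < n, b (m + 4) * b m = rhs p q b m) → NearCoprime b (n + 4)
  | 0, _ => h0
  | n + 1, hrec => by
    have ih := nearCoprime_add_four hp hq h0 (n := n) fun m hm => hrec m (by omega)
    obtain ⟨h1, h2, h3⟩ := isCoprime_add_four hp hq (hrec n n.lt_succ_self)
      (ih _ _ (by omega) (by omega) (by omega)) (ih _ _ (by omega) (by omega) (by omega))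
    intro i j hij hji hjn
    rcases Nat.lt_or_ge j (n + 4) with hj | hj
    · exact ih i j hij hji hj
    · obtain rfl : j = n + 4 := by omega
      obtain rfl | rfl | rfl : i = n + 1 ∨ i = n + 2 ∨ i = n + 3 := by omega
      exacts [h1, h2, h3]

theorem rhs_mul_eq_zero_of_eq_zero (hp : p ≠ 0) (hq : q ≠ 0) {b : ℕ → R} {n : ℕ}
    (hrec : ∀ k < 4, b (n + k + 4) * b (n + k) = rhs p q b (n + k)) (hzero : b (n + 4) = 0) :
    rhs p q b (n + 4) * (b (n + 1) ^ p * b (n + 2) ^ q * b (n + 3) ^ p) = 0 := by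
  have e0 : rhs p q b n = 0 := by simpa [hzero] using (hrec 0 (by norm_num)).symm
  have e1 : b (n + 5) * b (n + 1) = b (n + 3) ^ q := by
    simpa [rhs, hzero, zero_pow hp] using hrec 1 (by norm_num)
  have e2 : b (n + 6) * b (n + 2) = b (n + 5) ^ p * b (n + 3) ^ p := by
    simpa [rhs, hzero, zero_pow hq] using hrec 2 (by norm_num)
  have e3 : b (n + 7) * b (n + 3) = b (n + 5) ^ q := by
    simpa [rhs, hzero, zero_pow hp] using hrec 3 (by norm_num)
  calc rhs p q b (n + 4) * (b (n + 1) ^ p * b (n + 2) ^ q * b (n + 3) ^ p)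
      = (b (n + 7) * b (n + 3)) ^ p * (b (n + 5) * b (n + 1)) ^ p * b (n + 2) ^ q
        + (b (n + 6) * b (n + 2)) ^ q * b (n + 1) ^ p * b (n + 3) ^ p := by unfold rhs; ring
    _ = (b (n + 5) ^ q) ^ p * (b (n + 3) ^ q) ^ p * b (n + 2) ^ q
        + (b (n + 5) ^ p * b (n + 3) ^ p) ^ q * b (n + 1) ^ p * b (n + 3) ^ p := by
        rw [e1, e2, e3]
    _ = (b (n + 5) ^ p * b (n + 3) ^ p) ^ q * rhs p q b n := by unfold rhs; ring
    _ = 0 := by rw [e0, mul_zero]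

theorem dvd_rhs_add_four (hp : p ≠ 0) (hq : q ≠ 0) {b : ℕ → R} {n : ℕ}
    (hrec : ∀ k < 4, b (n + k + 4) * b (n + k) = rhs p q b (n + k))
    (hcop : ∀ k, 1 ≤ k → k ≤ 3 → IsCoprime (b (n + 4)) (b (n + k))) :
    b (n + 4) ∣ rhs p q b (n + 4) := by
  let π := Ideal.Quotient.mk (Ideal.span {b (n + 4)})
  have hπ := rhs_mul_eq_zero_of_eq_zero hp hq (b := π ∘ b) (n := n)
    (fun k hk => by simpa [map_rhs] using congrArg π (hrec k hk))
    (Ideal.Quotient.mk_singleton_self _)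
  rw [← map_rhs] at hπ
  simp only [Function.comp_apply, ← map_pow, ← map_mul, π, Ideal.Quotient.eq_zero_iff_dvd] at hπ
  refine IsCoprime.dvd_of_dvd_mul_right ?_ hπ
  exact ((hcop 1 le_rfl (by norm_num)).pow_right.mul_right
    (hcop 2 (by norm_num) (by norm_num)).pow_right).mul_right (hcop 3 (by norm_num) le_rfl).pow_right

end CommRing

variable (p q)

/-- `/` is floor division on `ℤ`; `seq_dvd_rhs` shows that it is exact. -/
def seq : ℕ → ℤ
  | 0 | 1 | 2 | 3 => 1
  | n + 4 => (seq (n + 3) ^ p * seq (n + 1) ^ p + seq (n + 2) ^ q) / seq n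

variable {p q}

theorem seq_of_lt_four {n : ℕ} (hn : n < 4) : seq p q n = 1 := by
  interval_cases n <;> rfl

theorem seq_mul_eq_rhs_of_dvd {n : ℕ} (h : seq p q n ∣ rhs p q (seq p q) n) :
    seq p q (n + 4) * seq p q n = rhs p q (seq p q) n := by
  rw [seq, ← rhs, Int.ediv_mul_cancel h]

theorem seq_dvd_rhs (hp : p ≠ 0) (hq : q ≠ 0) (n : ℕ) : seq p q n ∣ rhs p q (seq p q) n := by
  induction n using Nat.strong_induction_on with
  | _ n ih =>
  rcases Nat.lt_or_ge n 4 with hn | hn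
  · rw [seq_of_lt_four hn]
    exact one_dvd _
  obtain ⟨n, rfl⟩ := Nat.exists_eq_add_of_le' hn
  have hrec (m : ℕ) (hm : m < n + 4) : seq p q (m + 4) * seq p q m = rhs p q (seq p q) m :=
    seq_mul_eq_rhs_of_dvd (ih m hm)
  have h0 : NearCoprime (seq p q) 4 := fun i j _ _ hj => by
    rw [seq_of_lt_four hj]
    exact isCoprime_one_right
  have hcop := nearCoprime_add_four hp hq h0 (n := n + 1) fun m hm => hrec m (by omega)
  exact dvd_rhs_add_four hp hq (fun k hk => hrec _ (by omega))
    fun k hk1 hk3 => (hcop _ _ (by omega) (by omega) (by omega)).symm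

theorem seq_mul_eq_rhs (hp : p ≠ 0) (hq : q ≠ 0) (n : ℕ) :
    seq p q (n + 4) * seq p q n = rhs p q (seq p q) n :=
  seq_mul_eq_rhs_of_dvd (seq_dvd_rhs hp hq n)

theorem seq_pos (hp : p ≠ 0) (hq : q ≠ 0) (n : ℕ) : 0 < seq p q n :=
  pos_of_mul_eq_rhs (fun i hi => by rw [seq_of_lt_four hi]; exact one_pos) (seq_mul_eq_rhs hp hq) n

theorem eq_seq_of_eq_rhs_div {K : Type*} [Field K] [CharZero K] (hp : p ≠ 0) (hq : q ≠ 0)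
    {a : ℕ → K} (h0 : ∀ i < 4, a i = 1) (hrec : ∀ n, a (n + 4) = rhs p q a n / a n) :
    ∀ n, a n = seq p q n
  | 0 | 1 | 2 | 3 => by rw [h0 _ (by norm_num), seq_of_lt_four (by norm_num), Int.cast_one]
  | n + 4 => by
    have hne : (seq p q n : K) ≠ 0 := by exact_mod_cast (seq_pos hp hq n).ne'
    rw [hrec, rhs, eq_seq_of_eq_rhs_div hp hq h0 hrec n, eq_seq_of_eq_rhs_div hp hq h0 hrec (n + 1),
      eq_seq_of_eq_rhs_div hp hq h0 hrec (n + 2), eq_seq_of_eq_rhs_div hp hq h0 hrec (n + 3),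
      div_eq_iff hne]
    exact_mod_cast (seq_mul_eq_rhs hp hq n).symm

end Somos4

/-- Integrality of the non-homogeneous Somos-4 sequences. -/
theorem nonhomogeneous_somos4_positive_integer (p q : ℕ) (hp : 1 ≤ p) (hq : 1 ≤ q)
    (a : ℕ → ℚ)
    (h1 : a 1 = 1) (h2 : a 2 = 1) (h3 : a 3 = 1) (h4 : a 4 = 1)
    (hrec : ∀ n, 1 ≤ n →
      a (n + 4) = (a (n + 3) ^ p * a (n + 1) ^ p + a (n + 2) ^ q) / a n) :
    ∀ n, 1 ≤ n → ∃ k : ℤ, 0 < k ∧ a n = (k : ℚ) := by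
  have hseq : ∀ n, a (n + 1) = Somos4.seq p q n :=
    Somos4.eq_seq_of_eq_rhs_div (by omega) (by omega) (a := fun n => a (n + 1))
      (fun i hi => by interval_cases i <;> assumption) fun n => hrec (n + 1) (by omega)
  intro n hn
  obtain ⟨n, rfl⟩ := Nat.exists_eq_add_of_le' hn
  exact ⟨_, Somos4.seq_pos (by omega) (by omega) n, hseq n⟩
end

section
/- (Linear-system form of the classification of period-1 weight functions) Let N ≥ 2 and let c_2, …, c_N be nonnegative integers. Consider integer tuples (w_1, …, w_N) satisfying the linear system: w_N = −w_1 and w_{i−1} = w_i + c_i·w_1 for all 2 ≤ i ≤ N. Then: (1) every solution satisfies w_i = (1 − (c_2 + ⋯ + c_i))·w_1 for all 1 ≤ i ≤ N (with the empty sum for i = 1), so the solution is uniquely determined by w_1, i.e., unique up to an integer multiple; and (2) there exists a solution with w_1 ≠ 0 if and only if c_2 + ⋯ + c_N = 2. -/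
/-!
Unwinding the recurrence from `w 1` gives `w i = (1 - (c 2 + ⋯ + c i)) * w 1`, so every
solution is determined by `w 1`. The boundary condition `w N = -w 1` then reads
`(c 2 + ⋯ + c N - 2) * w 1 = 0`, which has a solution with `w 1 ≠ 0` exactly when the sum is `2`.
-/

open Finset

lemma sum_Icc_eq_sum_Icc_pred_add {M : Type*} [AddCommMonoid M] (f : ℕ → M) {a i : ℕ}
    (hai : a ≤ i) (hi : 1 ≤ i) :
    ∑ j ∈ Icc a i, f j = ∑ j ∈ Icc a (i - 1), f j + f i := by
  obtain ⟨k, rfl⟩ := Nat.exists_eq_add_of_le' hi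
  exact sum_Icc_succ_top hai f

section

variable {R : Type*} [CommRing R] {c : ℕ → R} {N : ℕ} {w : ℕ → R}

theorem eq_closed_form_of_recurrence
    (hrec : ∀ i, 2 ≤ i → i ≤ N → w (i - 1) = w i + c i * w 1) :
    ∀ i, 1 ≤ i → i ≤ N → w i = (1 - ∑ j ∈ Icc 2 i, c j) * w 1 := by
  intro i hi
  induction i, hi using Nat.le_induction with
  | base => simp
  | succ i hi ih =>
    intro hiN
    have hstep := hrec (i + 1) (by omega) hiN
    rw [Nat.add_sub_cancel, ih (by omega)] at hstep
    rw [sum_Icc_succ_top (by omega)]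
    linear_combination -hstep

theorem sum_eq_two_of_recurrence [NoZeroDivisors R] (hN : 1 ≤ N) (hw₁ : w 1 ≠ 0)
    (hwN : w N = -w 1) (hrec : ∀ i, 2 ≤ i → i ≤ N → w (i - 1) = w i + c i * w 1) :
    ∑ j ∈ Icc 2 N, c j = 2 := by
  have hclosed := eq_closed_form_of_recurrence hrec N hN le_rfl
  rw [hwN] at hclosed
  have hzero : (∑ j ∈ Icc 2 N, c j - 2) * w 1 = 0 := by linear_combination hclosed
  exact sub_eq_zero.mp ((mul_eq_zero.mp hzero).resolve_right hw₁)

end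

/-- Linear-system form of the classification of period-1 weight functions:
solutions of the system w_N = -w_1, w_{i-1} = w_i + c_i w_1 (2 ≤ i ≤ N) are
determined by w_1 (uniqueness up to an integer multiple), and a solution with
w_1 ≠ 0 exists iff c_2 + ⋯ + c_N = 2. -/
theorem period_one_weight_function_classification (N : ℕ) (hN : 2 ≤ N)
    (c : ℕ → ℕ) :
    (∀ w : ℕ → ℤ, w N = -(w 1) →
      (∀ i, 2 ≤ i → i ≤ N → w (i - 1) = w i + (c i : ℤ) * w 1) →
      ∀ i, 1 ≤ i → i ≤ N →
        w i = (1 - ∑ j ∈ Finset.Icc 2 i, (c j : ℤ)) * w 1)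
    ∧ ((∃ w : ℕ → ℤ, w 1 ≠ 0 ∧ w N = -(w 1) ∧
        (∀ i, 2 ≤ i → i ≤ N → w (i - 1) = w i + (c i : ℤ) * w 1))
      ↔ ∑ j ∈ Finset.Icc 2 N, c j = 2) := by
  refine ⟨fun w _ hrec => eq_closed_form_of_recurrence hrec, ⟨?_, fun hsum => ?_⟩⟩
  · rintro ⟨w, hw₁, hwN, hrec⟩
    exact_mod_cast sum_eq_two_of_recurrence (by omega) hw₁ hwN hrec
  · have hsum' : ∑ j ∈ Icc 2 N, (c j : ℤ) = 2 := by exact_mod_cast hsum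
    refine ⟨fun i => 1 - ∑ j ∈ Icc 2 i, (c j : ℤ), by simp, by simp [hsum'], fun i hi _ => ?_⟩
    simp only [sum_Icc_eq_sum_Icc_pred_add _ hi (by omega), Icc_eq_empty_of_lt one_lt_two,
      sum_empty]
    ring
end
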